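/- For all real numbers x, y with 0 < x < y < 1, y^y > x^x · (y-x)^(y-x). -/

import Mathlib

open Real

theorem rpow_self_mul_rpow_self_lt_rpow_self_add {a b : ℝ} (ha : 0 < a) (hb : 0 < b) :
    a ^ a * b ^ b < (a + b) ^ (a + b) :=
  calc a ^ a * b ^ b < (a + b) ^ a * (a + b) ^ b :=
        mul_lt_mul'' (rpow_lt_rpow ha.le (lt_add_of_pos_right a hb) ha)
          (rpow_lt_rpow hb.le (lt_add_of_pos_left b ha) hb) (by positivity) (by positivity)
    _ = (a + b) ^ (a + b) := (rpow_add (by positivity) a b).symm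

theorem rpow_self_gt_mul_general {x y : ℝ} (hx : 0 < x) (hxy : x < y) :
    x ^ x * (y - x) ^ (y - x) < y ^ y := by
  simpa using rpow_self_mul_rpow_self_lt_rpow_self_add hx (sub_pos.2 hxy)

/-- For all real `x`, `y` with `0 < x < y < 1`, we have `y^y > x^x * (y-x)^(y-x)`,
where powers are real powers (`exp (a * ln a)` for positive base). -/
theorem rpow_self_gt_mul {x y : ℝ} (hx : 0 < x) (hxy : x < y) (hy : y < 1) :
    x ^ x * (y - x) ^ (y - x) < y ^ y :=
  rpow_self_gt_mul_general hx hxy
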